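/- Let m, n ∈ ℕ with 2 ≤ m ≤ n and let ρ = |Φ⟩⟨Φ| be a pure m⊗n state (Φ a unit vector in ℂ^m ⊗ ℂ^n). Then the geometric discord satisfies D(ρ) ≤ 1. -/

import Mathlib

open Matrix BigOperators Polynomial
open scoped Kronecker ComplexOrder

noncomputable section

/-- Squared Hilbert–Schmidt norm `‖C‖² = Tr(CᴴC)`. -/
def hsNormSq {d : Type*} [Fintype d] (C : Matrix d d ℂ) : ℝ :=
  (Matrix.trace (Cᴴ * C)).re

/-- Trace norm `‖X‖₁ = Tr √(XᴴX)`. -/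
def traceNorm {d : Type*} [Fintype d] [DecidableEq d] (X : Matrix d d ℂ) : ℝ :=
  (((Matrix.posSemidef_conjTranspose_mul_self X).1.eigenvectorUnitary.1 *
    diagonal (((↑) : ℝ → ℂ) ∘ Real.sqrt ∘ (Matrix.posSemidef_conjTranspose_mul_self X).1.eigenvalues) *
    (star (Matrix.posSemidef_conjTranspose_mul_self X).1.eigenvectorUnitary : Matrix d d ℂ)).trace).re

/-- Partial transpose on the first factor: `ρ^Γ((i,k),(j,l)) = ρ((j,k),(i,l))`. -/
def ptranspose {m n : ℕ} (ρ : Matrix (Fin m × Fin n) (Fin m × Fin n) ℂ) :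
    Matrix (Fin m × Fin n) (Fin m × Fin n) ℂ :=
  Matrix.of fun p q => ρ (q.1, p.2) (p.1, q.2)

/-- Negativity `N(ρ) = (‖ρ^Γ‖₁ - 1)/(m-1)`. -/
def negativity {m n : ℕ} (ρ : Matrix (Fin m × Fin n) (Fin m × Fin n) ℂ) : ℝ :=
  (traceNorm (ptranspose ρ) - 1) / ((m : ℝ) - 1)

/-- `ψ` is an orthonormal basis of `ℂ^m` (an orthonormal family of `m` vectors). -/
def IsONB {m : ℕ} (ψ : Fin m → (Fin m → ℂ)) : Prop :=
  ∀ k l, (∑ i, star (ψ k i) * ψ l i) = if k = l then 1 else 0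

/-- The rank-one projector `|v⟩⟨v|`. -/
def proj {m : ℕ} (v : Fin m → ℂ) : Matrix (Fin m) (Fin m) ℂ :=
  Matrix.vecMulVec v (fun j => star (v j))

/-- The von Neumann measurement map
`Π^A(ρ) = ∑ k, (|ψ_k⟩⟨ψ_k| ⊗ I_n) ρ (|ψ_k⟩⟨ψ_k| ⊗ I_n)`. -/
def piA {m n : ℕ} (ψ : Fin m → (Fin m → ℂ))
    (ρ : Matrix (Fin m × Fin n) (Fin m × Fin n) ℂ) :
    Matrix (Fin m × Fin n) (Fin m × Fin n) ℂ :=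
  ∑ k, (proj (ψ k) ⊗ₖ (1 : Matrix (Fin n) (Fin n) ℂ)) * ρ *
       (proj (ψ k) ⊗ₖ (1 : Matrix (Fin n) (Fin n) ℂ))

/-- Geometric discord
`D(ρ) = (m/(m-1)) · inf over von Neumann measurements of ‖ρ - Π^A(ρ)‖²`. -/
def gd {m n : ℕ} (ρ : Matrix (Fin m × Fin n) (Fin m × Fin n) ℂ) : ℝ :=
  ((m : ℝ) / ((m : ℝ) - 1)) *
    ⨅ ψ : {ψ : Fin m → (Fin m → ℂ) // IsONB ψ}, hsNormSq (ρ - piA ψ.1 ρ)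

/-- An `m ⊗ n` state: positive semidefinite with trace one. -/
def IsState {m n : ℕ} (ρ : Matrix (Fin m × Fin n) (Fin m × Fin n) ℂ) : Prop :=
  ρ.PosSemidef ∧ ρ.trace = 1

/-- Reindex a `6 × 6` matrix by `Fin 2 × Fin 3` with the ordering
`(1,1),(1,2),(1,3),(2,1),(2,2),(2,3)`. -/
def ofM6 (M : Matrix (Fin 6) (Fin 6) ℂ) :
    Matrix (Fin 2 × Fin 3) (Fin 2 × Fin 3) ℂ :=
  Matrix.of fun p q =>
    M ⟨p.1.val * 3 + p.2.val, by have := p.1.isLt; have := p.2.isLt; omega⟩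
      ⟨q.1.val * 3 + q.2.val, by have := q.1.isLt; have := q.2.isLt; omega⟩

/-- The family of states `ρ₁(a,b)`. -/
def rho1 (a b : ℝ) : Matrix (Fin 2 × Fin 3) (Fin 2 × Fin 3) ℂ :=
  ofM6 ((1 / (2 * ((a : ℂ)^2 + (b : ℂ)^2))) •
    !![(a:ℂ)^2, 0, 0, 0, (a:ℂ)*(b:ℂ), 0;
       0, (b:ℂ)^2, 0, 0, 0, (a:ℂ)*(b:ℂ);
       0, 0, 0, 0, 0, 0;
       0, 0, 0, 0, 0, 0;
       (a:ℂ)*(b:ℂ), 0, 0, 0, (b:ℂ)^2, 0;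
       0, (a:ℂ)*(b:ℂ), 0, 0, 0, (a:ℂ)^2])

/-! Measure in the computational basis. For `ρ = |Φ⟩⟨Φ|` this dephasing erases exactly the
blocks `(i, j)` with `i ≠ j`, whose Hilbert–Schmidt mass is `∑_{i ≠ j} p_i p_j = 1 - ∑ p_i²`,
where `p_i = ∑_a |Φ(i,a)|²`. Cauchy–Schwarz gives `∑ p_i² ≥ 1/m`, so
`D(ρ) ≤ m/(m-1) · (1 - 1/m) = 1`. -/

theorem hsNormSq_eq_sum_normSq {d : Type*} [Fintype d] (C : Matrix d d ℂ) :
    hsNormSq C = ∑ p, ∑ q, Complex.normSq (C q p) := by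
  simp only [hsNormSq, trace, diag, mul_apply, conjTranspose_apply, Complex.re_sum,
    RCLike.star_def, Complex.conj_mul', Complex.normSq_eq_norm_sq]
  norm_cast

theorem hsNormSq_nonneg {d : Type*} [Fintype d] (C : Matrix d d ℂ) : 0 ≤ hsNormSq C := by
  rw [hsNormSq_eq_sum_normSq]
  exact Finset.sum_nonneg fun _ _ => Finset.sum_nonneg fun _ _ => Complex.normSq_nonneg _

theorem isONB_single (m : ℕ) : IsONB (fun k : Fin m => Pi.single k (1 : ℂ)) := by
  intro k l
  by_cases h : k = l
  · subst h; simp [Pi.single_apply]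
  · simp [Pi.single_apply, h, Ne.symm h]

theorem piA_single_apply {m n : ℕ} (ρ : Matrix (Fin m × Fin n) (Fin m × Fin n) ℂ)
    (p q : Fin m × Fin n) :
    piA (fun k => Pi.single k 1) ρ p q = if p.1 = q.1 then ρ p q else 0 := by
  obtain ⟨i, a⟩ := p
  obtain ⟨j, b⟩ := q
  rcases eq_or_ne i j with rfl | h <;>
    simp [piA, Matrix.sum_apply, mul_apply, proj, vecMulVec_apply, one_apply,
      Fintype.sum_prod_type, Pi.single_apply, *]

theorem gd_le_of_isONB {m n : ℕ} (ρ : Matrix (Fin m × Fin n) (Fin m × Fin n) ℂ)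
    {ψ : Fin m → Fin m → ℂ} (hψ : IsONB ψ) :
    gd ρ ≤ (m / ((m : ℝ) - 1)) * hsNormSq (ρ - piA ψ ρ) := by
  have hfac : 0 ≤ (m : ℝ) / ((m : ℝ) - 1) := by
    rcases Nat.eq_zero_or_pos m with rfl | hm
    · simp
    · exact div_nonneg m.cast_nonneg (sub_nonneg.mpr (Nat.one_le_cast.mpr hm))
  refine mul_le_mul_of_nonneg_left (ciInf_le ⟨0, ?_⟩ (⟨ψ, hψ⟩ : {ψ // IsONB ψ})) hfac
  rintro _ ⟨ψ, rfl⟩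
  exact hsNormSq_nonneg _

theorem hsNormSq_pure_sub_piA_single {m n : ℕ} (Φ : Fin m × Fin n → ℂ) :
    hsNormSq (vecMulVec Φ (fun x => star (Φ x)) -
        piA (fun k => Pi.single k 1) (vecMulVec Φ (fun x => star (Φ x)))) =
      (∑ i, ∑ a, Complex.normSq (Φ (i, a))) ^ 2 -
        ∑ i, (∑ a, Complex.normSq (Φ (i, a))) ^ 2 := by
  set ρ := vecMulVec Φ (fun x => star (Φ x))
  have hentry : ∀ x y : Fin m × Fin n,
      Complex.normSq ((ρ - piA (fun k => Pi.single k 1) ρ) y x) =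
        Complex.normSq (Φ y) * Complex.normSq (Φ x) -
          if y.1 = x.1 then Complex.normSq (Φ y) * Complex.normSq (Φ x) else 0 := by
    intro x y
    rw [Matrix.sub_apply, piA_single_apply]
    split_ifs <;> simp [ρ, vecMulVec_apply]
  simp only [hsNormSq_eq_sum_normSq, hentry, Finset.sum_sub_distrib, Fintype.sum_prod_type]
  simp [sq, Finset.sum_mul, Finset.mul_sum, Finset.sum_ite_eq, eq_comm]

theorem inv_card_le_sum_sq {ι : Type*} [Fintype ι] {p : ι → ℝ} (hp : ∑ i, p i = 1) :
    (Fintype.card ι : ℝ)⁻¹ ≤ ∑ i, p i ^ 2 := by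
  have hcs := sq_sum_le_card_mul_sum_sq (s := Finset.univ) (f := p)
  rw [hp, one_pow, Finset.card_univ] at hcs
  have hcard : (0 : ℝ) < Fintype.card ι :=
    Nat.cast_pos.mpr (Nat.pos_of_ne_zero fun h => by norm_num [h] at hcs)
  rw [inv_le_iff_one_le_mul₀' hcard]
  exact_mod_cast hcs

theorem stmt4_general (m n : ℕ) (hm : 2 ≤ m)
    (Φ : Fin m × Fin n → ℂ) (hΦ : ∑ x, star (Φ x) * Φ x = 1)
    (ρ : Matrix (Fin m × Fin n) (Fin m × Fin n) ℂ)
    (hρ : ρ = Matrix.vecMulVec Φ (fun x => star (Φ x))) :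
    gd ρ ≤ 1 := by
  set p : Fin m → ℝ := fun i => ∑ a, Complex.normSq (Φ (i, a))
  have hp : ∑ i, p i = 1 := by
    have := congrArg Complex.re hΦ
    simpa [p, Complex.re_sum, ← Complex.normSq_eq_conj_mul_self, Fintype.sum_prod_type] using this
  have hm1 : (0 : ℝ) < m - 1 := by
    have : (2 : ℝ) ≤ m := by exact_mod_cast hm
    linarith
  calc gd ρ ≤ m / (m - 1) * hsNormSq (ρ - piA (fun k => Pi.single k 1) ρ) :=
        gd_le_of_isONB ρ (isONB_single m)
    _ = m / (m - 1) * (1 - ∑ i, p i ^ 2) := by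
        rw [hρ, hsNormSq_pure_sub_piA_single, hp, one_pow]
    _ ≤ m / (m - 1) * (1 - (m : ℝ)⁻¹) := by
        gcongr
        simpa using inv_card_le_sum_sq hp
    _ = 1 := by
        field_simp

theorem stmt4 (m n : ℕ) (hm : 2 ≤ m) (hmn : m ≤ n)
    (Φ : Fin m × Fin n → ℂ) (hΦ : ∑ x, star (Φ x) * Φ x = 1)
    (ρ : Matrix (Fin m × Fin n) (Fin m × Fin n) ℂ)
    (hρ : ρ = Matrix.vecMulVec Φ (fun x => star (Φ x))) :
    gd ρ ≤ 1 :=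
  stmt4_general m n hm Φ hΦ ρ hρ

end
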